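/- There is no linear map T : n(j') → End(n(j')) satisfying (AS1), (AS2), (AS3) together with T_X X = 0 for all X ∈ n(j'); that is, n(j') admits no naturally reductive homogeneous structure, and hence the associated 2-step nilpotent Lie group N(j') is not naturally reductive. -/

import Mathlib

abbrev V3 : Type := Fin 3 → ℝ
abbrev V6 : Type := V3 × V3

/-- The pure quaternion `c₁ i + c₂ j + c₃ k` associated to `c = (c₁,c₂,c₃) ∈ ℝ³`. -/
def toQ (c : V3) : Quaternion ℝ := ⟨0, c 0, c 1, c 2⟩

/-- The vector in `ℝ³` formed by the imaginary (pure) part of a quaternion. -/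
def imQ (q : Quaternion ℝ) : V3 := ![q.imI, q.imJ, q.imK]

/-- `j_C(L,R) = (Im(C·L), Im(C·R))`. -/
noncomputable def jFun (C : V3) (x : V6) : V6 := (imQ (toQ C * toQ x.1), imQ (toQ C * toQ x.2))

/-- `j'_C(L,R) = (Im(R·C), Im(L·C))`. -/
noncomputable def j'Fun (C : V3) (x : V6) : V6 := (imQ (toQ x.2 * toQ C), imQ (toQ x.1 * toQ C))

/-- The standard inner product on `ℝ³`. -/
def dot3 (a b : V3) : ℝ := ∑ i, a i * b i

/-- The standard inner product on `ℝ⁶ = ℝ³ × ℝ³`. -/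
def dot6 (x y : V6) : ℝ := dot3 x.1 y.1 + dot3 x.2 y.2

/-- The Levi-Civita connection of `N(j')` on left-invariant fields:
`∇_V X = −½ j'_{V^z} X^v − ½ j'_{X^z} V^v + ½ [V^v, X^v]'`. -/
noncomputable def nabla' (β' : V6 → V6 → V3) (V X : V6 × V3) : V6 × V3 :=
  (-((1/2 : ℝ) • j'Fun V.2 X.1) - (1/2 : ℝ) • j'Fun X.2 V.1, (1/2 : ℝ) • β' V.1 X.1)

/-- The curvature `R(X,Y)Z = ∇_X(∇_Y Z) − ∇_Y(∇_X Z) − ∇_{[X,Y]} Z` of `N(j')`. -/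
noncomputable def Rcurv' (β' : V6 → V6 → V3) (X Y Z : V6 × V3) : V6 × V3 :=
  nabla' β' X (nabla' β' Y Z) - nabla' β' Y (nabla' β' X Z) -
    nabla' β' ((0 : V6), β' X.1 Y.1) Z

lemma prodExt {A B : V6 × V3} (h1 : A.1.1 = B.1.1) (h2 : A.1.2 = B.1.2) (h3 : A.2 = B.2) :
    A = B := by
  obtain ⟨⟨a1,a2⟩,a3⟩ := A; obtain ⟨⟨b1,b2⟩,b3⟩ := B
  simp_all

lemma z6lit : (0 : V6) = (![0,0,0], ![0,0,0]) := by
  refine Prod.ext ?_ ?_ <;> funext i <;> fin_cases i <;> simp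

lemma z9lit : (((![0,0,0], ![0,0,0]), ![0,0,0]) : V6 × V3) = 0 := by
  refine prodExt ?_ ?_ ?_ <;> funext i <;> fin_cases i <;> simp

lemma etaV (p : V6 × V3) :
    p = ((![p.1.1 0, p.1.1 1, p.1.1 2], ![p.1.2 0, p.1.2 1, p.1.2 2]),
      ![p.2 0, p.2 1, p.2 2]) := by
  refine prodExt ?_ ?_ ?_ <;> funext i <;> fin_cases i <;> simp

lemma subE (a0 a1 a2 a3 a4 a5 a6 a7 a8 b0 b1 b2 b3 b4 b5 b6 b7 b8 : ℝ) :
    (((![a0,a1,a2], ![a3,a4,a5]), ![a6,a7,a8]) : V6 × V3) -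
      ((![b0,b1,b2], ![b3,b4,b5]), ![b6,b7,b8]) =
    ((![a0-b0,a1-b1,a2-b2], ![a3-b3,a4-b4,a5-b5]), ![a6-b6,a7-b7,a8-b8]) := by
  refine prodExt ?_ ?_ ?_ <;> funext i <;> fin_cases i <;> simp

lemma bE (β' : V6 → V6 → V3)
    (hb : ∀ (x y : V6) (i : Fin 3),
      β' x y i = dot6 (j'Fun (fun j => if j = i then 1 else 0) x) y)
    (v0 v1 v2 v3 v4 v5 w0 w1 w2 w3 w4 w5 : ℝ) :
    β' (![v0,v1,v2], ![v3,v4,v5]) (![w0,w1,w2], ![w3,w4,w5]) =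
    ![-(v1*w5) + v2*w4 - v4*w2 + v5*w1,
      v0*w5 - v2*w3 + v3*w2 - v5*w0,
      -(v0*w4) + v1*w3 - v3*w1 + v4*w0] := by
  funext i
  fin_cases i <;>
    · rw [hb]
      simp only [dot6, dot3, j'Fun, imQ, Quaternion.imI_mul, Quaternion.imJ_mul, Quaternion.imK_mul]
      simp [dot6, dot3, j'Fun, imQ, toQ, Fin.sum_univ_three, Quaternion.imI_mul,
        Quaternion.imJ_mul, Quaternion.imK_mul]
      ring

lemma nE (β' : V6 → V6 → V3)
    (hb : ∀ (x y : V6) (i : Fin 3),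
      β' x y i = dot6 (j'Fun (fun j => if j = i then 1 else 0) x) y)
    (v0 v1 v2 v3 v4 v5 v6 v7 v8 w0 w1 w2 w3 w4 w5 w6 w7 w8 : ℝ) :
    nabla' β' ((![v0,v1,v2], ![v3,v4,v5]), ![v6,v7,v8])
      ((![w0,w1,w2], ![w3,w4,w5]), ![w6,w7,w8]) =
    ((![(-1/2)*(v4*w8) + (1/2)*(v5*w7) + (1/2)*(v7*w5) + (-1/2)*(v8*w4),
        (1/2)*(v3*w8) + (-1/2)*(v5*w6) + (-1/2)*(v6*w5) + (1/2)*(v8*w3),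
        (-1/2)*(v3*w7) + (1/2)*(v4*w6) + (1/2)*(v6*w4) + (-1/2)*(v7*w3)],
      ![(-1/2)*(v1*w8) + (1/2)*(v2*w7) + (1/2)*(v7*w2) + (-1/2)*(v8*w1),
        (1/2)*(v0*w8) + (-1/2)*(v2*w6) + (-1/2)*(v6*w2) + (1/2)*(v8*w0),
        (-1/2)*(v0*w7) + (1/2)*(v1*w6) + (1/2)*(v6*w1) + (-1/2)*(v7*w0)]),
     ![(-1/2)*(v1*w5) + (1/2)*(v2*w4) + (-1/2)*(v4*w2) + (1/2)*(v5*w1),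
       (1/2)*(v0*w5) + (-1/2)*(v2*w3) + (1/2)*(v3*w2) + (-1/2)*(v5*w0),
       (-1/2)*(v0*w4) + (1/2)*(v1*w3) + (-1/2)*(v3*w1) + (1/2)*(v4*w0)]) := by
  refine prodExt ?_ ?_ ?_
  · funext i
    fin_cases i <;>
      · simp only [nabla', j'Fun, imQ, Quaternion.imI_mul, Quaternion.imJ_mul, Quaternion.imK_mul]
        simp [nabla', j'Fun, imQ, toQ, Quaternion.imI_mul, Quaternion.imJ_mul,
          Quaternion.imK_mul]
        ring
  · funext i
    fin_cases i <;>
      · simp only [nabla', j'Fun, imQ, Quaternion.imI_mul, Quaternion.imJ_mul, Quaternion.imK_mul]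
        simp [nabla', j'Fun, imQ, toQ, Quaternion.imI_mul, Quaternion.imJ_mul,
          Quaternion.imK_mul]
        ring
  · funext i
    fin_cases i <;>
      · simp [nabla', bE β' hb]
        ring

set_option maxHeartbeats 2000000 in
/-- `n(j')` admits no naturally reductive homogeneous structure: there is no linear
`T : n(j') → End(n(j'))` satisfying (AS1), (AS2), (AS3) with `T_X X = 0`; hence the
2-step nilpotent Lie group `N(j')` is not naturally reductive. -/
theorem n_j'_not_naturally_reductive
    (β' : V6 → V6 → V3)
    (hβ' : ∀ (x y : V6) (c : V3), dot3 (β' x y) c = dot6 (j'Fun c x) y) :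
    ¬ ∃ T : (V6 × V3) →ₗ[ℝ] Module.End ℝ (V6 × V3),
      -- (AS1)
      (∀ V X Y Z : V6 × V3,
        nabla' β' V (Rcurv' β' X Y Z) - Rcurv' β' (nabla' β' V X) Y Z -
            Rcurv' β' X (nabla' β' V Y) Z - Rcurv' β' X Y (nabla' β' V Z) =
          T V (Rcurv' β' X Y Z) - Rcurv' β' (T V X) Y Z -
            Rcurv' β' X (T V Y) Z - Rcurv' β' X Y (T V Z)) ∧
      -- (AS2)
      (∀ X Y Z : V6 × V3,
        nabla' β' X (T Y Z) - T (nabla' β' X Y) Z - T Y (nabla' β' X Z) =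
          T X (T Y Z) - T Y (T X Z) - T (T X Y) Z) ∧
      -- (AS3)
      (∀ X Y Z : V6 × V3,
        (dot6 (T X Y).1 Z.1 + dot3 (T X Y).2 Z.2) +
          (dot6 Y.1 (T X Z).1 + dot3 Y.2 (T X Z).2) = 0) ∧
      -- naturally reductive
      (∀ X : V6 × V3, T X X = 0) := by
  rintro ⟨T, h1, -, h3, h4⟩
  have hb : ∀ (x y : V6) (i : Fin 3),
      β' x y i = dot6 (j'Fun (fun j => if j = i then 1 else 0) x) y := by
    intro x y i
    have h := hβ' x y (fun j => if j = i then 1 else 0)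
    fin_cases i <;> simpa [dot3, Fin.sum_univ_three] using h
  have hsw : ∀ X Y : V6 × V3, T X Y = - T Y X := by
    intro X Y
    have h := h4 (X + Y)
    simp only [map_add, LinearMap.add_apply, h4 X, h4 Y, add_zero, zero_add] at h
    first
      | exact eq_neg_of_add_eq_zero_left h
      | exact eq_neg_of_add_eq_zero_right h
  have hRA : Rcurv' β' ((![1,0,0], ![0,0,0]), ![0,0,0]) ((![0,1,0], ![0,0,0]), ![0,0,0]) ((![0,0,0], ![0,0,1]), ![0,0,0]) = 0 := by
    simp only [Rcurv', z6lit, bE β' hb, nE β' hb, subE]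
    refine prodExt ?_ ?_ ?_ <;> funext i <;> fin_cases i <;> simp
  have hRB : Rcurv' β' ((![1,0,0], ![0,0,0]), ![0,0,0]) ((![0,1,0], ![0,0,0]), ![0,0,0]) ((![1,0,0], ![0,0,0]), ![0,0,0]) = 0 := by
    simp only [Rcurv', z6lit, bE β' hb, nE β' hb, subE]
    refine prodExt ?_ ?_ ?_ <;> funext i <;> fin_cases i <;> simp
  have hA := h1 ((![0,1,0], ![0,0,0]), ![0,0,0]) ((![1,0,0], ![0,0,0]), ![0,0,0]) ((![0,1,0], ![0,0,0]), ![0,0,0]) ((![0,0,0], ![0,0,1]), ![0,0,0])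
  have hB := h1 ((![0,0,0], ![0,0,0]), ![1,0,0]) ((![1,0,0], ![0,0,0]), ![0,0,0]) ((![0,1,0], ![0,0,0]), ![0,0,0]) ((![1,0,0], ![0,0,0]), ![0,0,0])
  have hC := h3 ((![0,1,0], ![0,0,0]), ![0,0,0]) ((![0,0,0], ![0,0,1]), ![0,0,0]) ((![0,0,0], ![0,0,0]), ![1,0,0])
  have hD := hsw ((![0,1,0], ![0,0,0]), ![0,0,0]) ((![0,0,0], ![0,0,0]), ![1,0,0])
  rw [hRA, h4 ((![0,1,0], ![0,0,0]), ![0,0,0])] at hA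
  simp only [map_zero] at hA
  rw [hRB] at hB
  simp only [map_zero] at hB
  generalize hga : T ((![0,1,0], ![0,0,0]), ![0,0,0]) ((![1,0,0], ![0,0,0]), ![0,0,0]) = a at hA
  generalize hgb : T ((![0,1,0], ![0,0,0]), ![0,0,0]) ((![0,0,0], ![0,0,1]), ![0,0,0]) = b at hA hC
  generalize hgc : T ((![0,0,0], ![0,0,0]), ![1,0,0]) ((![1,0,0], ![0,0,0]), ![0,0,0]) = c at hB
  generalize hgd : T ((![0,0,0], ![0,0,0]), ![1,0,0]) ((![0,1,0], ![0,0,0]), ![0,0,0]) = d at hB hD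
  generalize hge : T ((![0,1,0], ![0,0,0]), ![0,0,0]) ((![0,0,0], ![0,0,0]), ![1,0,0]) = e2 at hC hD
  rw [etaV a, etaV b] at hA
  rw [etaV c, etaV d] at hB
  rw [← z9lit] at hA hB
  simp only [Rcurv', z6lit, bE β' hb, nE β' hb, subE] at hA hB
  have eA := congrFun (congrArg (fun p : V6 × V3 => p.2) hA) 1
  have eB := congrFun (congrArg (fun p : V6 × V3 => p.1.2) hB) 2
  have eD := congrFun (congrArg (fun p : V6 × V3 => p.1.2) hD) 2
  norm_num at eA eB
  simp [dot6, dot3, Fin.sum_univ_three] at hC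
  simp at eD
  simp only [Matrix.cons_val_two, Matrix.tail_cons, Matrix.head_cons] at eB
  linarith [eA, eB, hC, eD]
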